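/- Consider the SIR⁽²⁾S model with vaccination. Every stationary state (s̄, ī, r̄₀, r̄₁) with ī > 0 satisfies: (a) s̄ + r̄₁/2 = 1/R₀; (b) s̄ = (μ + 2·c₂/R₀)/(β·ī + μ + η_s + 2·c₂); (c) r̄₀ = (η_s·s̄ + γ·ī + η₁·r̄₁)/(c₁+μ). -/

import Mathlib

/-!
Dividing the infected balance by `ī > 0` gives `β (s̄ + r̄₁/2) = γ + μ`, which is (a).
Substituting `c₂ r̄₁ = 2 c₂ (1/R₀ - s̄)` from (a) into the susceptible balance makes it linear
in `s̄`, which is (b); (c) is the `r₀`-balance solved for `r̄₀`.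
-/

/-- A stationary state of the SIR⁽²⁾S model with vaccination: nonnegative entries summing
to 1, satisfying the stationarity equations with vaccination rates ηs, η₁. -/
def IsStationarySIR2SVac (β γ μ c₁ c₂ ηs η₁ s i r₀ r₁ : ℝ) : Prop :=
  0 ≤ s ∧ 0 ≤ i ∧ 0 ≤ r₀ ∧ 0 ≤ r₁ ∧ s + i + r₀ + r₁ = 1 ∧
  μ - β * s * i + c₂ * r₁ - μ * s - ηs * s = 0 ∧
  β * s * i + (β / 2) * r₁ * i - (γ + μ) * i = 0 ∧
  ηs * s + γ * i - (c₁ + μ) * r₀ + η₁ * r₁ = 0 ∧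
  c₁ * r₀ - (β / 2) * r₁ * i - (c₂ + μ + η₁) * r₁ = 0

section Field

variable {K : Type*} [Field K]

theorem sir2s_s_add_r₁_half_eq_of_infected_balance {β γ μ s i r₁ : K} (hβ : β ≠ 0)
    (hi : i ≠ 0) (h : β * s * i + (β / 2) * r₁ * i - (γ + μ) * i = 0) :
    s + r₁ / 2 = (γ + μ) / β := by
  have hbal : β * (s + r₁ / 2) = γ + μ :=
    mul_right_cancel₀ hi (by linear_combination h)
  rw [eq_div_iff hβ]
  linear_combination hbal

theorem sir2s_s_mul_eq_of_susceptible_balance [CharZero K] {β γ μ c₂ ηs s i r₁ : K}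
    (h : μ - β * s * i + c₂ * r₁ - μ * s - ηs * s = 0) (ha : s + r₁ / 2 = (γ + μ) / β) :
    s * (β * i + μ + ηs + 2 * c₂) = μ + 2 * c₂ * (γ + μ) / β := by
  linear_combination -h + 2 * c₂ * ha

end Field

theorem sir2s_vac_endemic_identities_general
    (β γ μ c₁ c₂ ηs η₁ : ℝ) (hβ : 0 < β) (hμ : 0 < μ)
    (hc₁ : 0 < c₁) (hc₂ : 0 < c₂) (hηs : 0 ≤ ηs)
    (s i r₀ r₁ : ℝ)
    (hstat : IsStationarySIR2SVac β γ μ c₁ c₂ ηs η₁ s i r₀ r₁)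
    (hi : 0 < i) :
    s + r₁ / 2 = 1 / (β / (γ + μ)) ∧
    s = (μ + 2 * c₂ / (β / (γ + μ))) / (β * i + μ + ηs + 2 * c₂) ∧
    r₀ = (ηs * s + γ * i + η₁ * r₁) / (c₁ + μ) := by
  obtain ⟨-, -, -, -, -, hsus, hinf, hr₀, -⟩ := hstat
  have ha := sir2s_s_add_r₁_half_eq_of_infected_balance hβ.ne' hi.ne' hinf
  refine ⟨by rwa [one_div_div], ?_, ?_⟩
  · rw [div_div_eq_mul_div, eq_div_iff (by positivity)]
    exact sir2s_s_mul_eq_of_susceptible_balance hsus ha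
  · rw [eq_div_iff (by positivity)]
    linear_combination -hr₀

/-- Every endemic stationary state (ī > 0) of the SIR⁽²⁾S model with vaccination satisfies
(a) s̄ + r̄₁/2 = 1/R₀, (b) s̄ = (μ + 2c₂/R₀)/(β·ī + μ + ηs + 2c₂), and
(c) r̄₀ = (ηs·s̄ + γ·ī + η₁·r̄₁)/(c₁+μ), where R₀ = β/(γ+μ). -/
theorem sir2s_vac_endemic_identities
    (β γ μ c₁ c₂ ηs η₁ : ℝ) (hβ : 0 < β) (hγ : 0 < γ) (hμ : 0 < μ)
    (hc₁ : 0 < c₁) (hc₂ : 0 < c₂) (hηs : 0 ≤ ηs) (hη₁ : 0 ≤ η₁)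
    (s i r₀ r₁ : ℝ)
    (hstat : IsStationarySIR2SVac β γ μ c₁ c₂ ηs η₁ s i r₀ r₁)
    (hi : 0 < i) :
    s + r₁ / 2 = 1 / (β / (γ + μ)) ∧
    s = (μ + 2 * c₂ / (β / (γ + μ))) / (β * i + μ + ηs + 2 * c₂) ∧
    r₀ = (ηs * s + γ * i + η₁ * r₁) / (c₁ + μ) :=
  sir2s_vac_endemic_identities_general β γ μ c₁ c₂ ηs η₁ hβ hμ hc₁ hc₂ hηs s i r₀ r₁ hstat hi
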